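/- Let S be a profinite semigroup. If S is a KR-cover, then S is equidivisible. -/

import Mathlib

set_option autoImplicit false

/-! ### General notions: topological semigroups, pseudovarieties, pro-V semigroups -/

/-- Continuity of a map into a type regarded with the discrete topology. -/
def ContinuousDisc {S : Type} [TopologicalSpace S] {T : Type} (f : S → T) : Prop :=
  @Continuous S T _ ⊥ f

/-- A pseudovariety of semigroups: a class of finite semigroups closed under
homomorphic images, subsemigroups and finite direct products. -/
structure Pseudovariety : Type 1 where
  Mem : ∀ (S : Type) [Semigroup S], Prop
  finite : ∀ (S : Type) [Semigroup S], Mem S → Finite S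
  closed_hom : ∀ (S T : Type) [Semigroup S] [Semigroup T] (f : S →ₙ* T),
    Mem S → Function.Surjective f → Mem T
  closed_sub : ∀ (S T : Type) [Semigroup S] [Semigroup T] (f : T →ₙ* S),
    Mem S → Function.Injective f → Mem T
  closed_prod : ∀ (ι : Type) [Finite ι] (S : ι → Type) [∀ i, Semigroup (S i)],
    (∀ i, Mem (S i)) → Mem (∀ i, S i)

/-- A bundled member of a pseudovariety `V` (a finite semigroup belonging to `V`),
always regarded as carrying the discrete topology. -/
structure SgrIn (V : Pseudovariety) : Type 1 where
  carrier : Type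
  [str : Semigroup carrier]
  mem : V.Mem carrier

attribute [instance] SgrIn.str

/-- A (bundled) topological semigroup. -/
structure TopSgr : Type 1 where
  carrier : Type
  [str : Semigroup carrier]
  [top : TopologicalSpace carrier]

attribute [instance] TopSgr.str TopSgr.top

/-- A finite semigroup regarded as a topological semigroup with the discrete topology. -/
def discTopSgr (S : Type) [Semigroup S] : TopSgr :=
  @TopSgr.mk S _ ⊥

/-- A pro-V semigroup: a compact Hausdorff topological semigroup that is residually `V`. -/
def IsProV (V : Pseudovariety) (S : TopSgr) : Prop :=
  CompactSpace S.carrier ∧ T2Space S.carrier ∧ ContinuousMul S.carrier ∧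
    ∀ x y : S.carrier, x ≠ y → ∃ (F : SgrIn V) (f : S.carrier →ₙ* F.carrier),
      ContinuousDisc ⇑f ∧ f x ≠ f y

/-- A profinite semigroup: a compact Hausdorff totally disconnected topological semigroup. -/
def IsProfiniteSgr (S : TopSgr) : Prop :=
  CompactSpace S.carrier ∧ T2Space S.carrier ∧ TotallyDisconnectedSpace S.carrier ∧
    ContinuousMul S.carrier

/-- `C`, together with the continuous homomorphisms `φ i`, is a `V`-coproduct of the
family `S` of pro-`V` semigroups. -/
structure IsCoproduct (V : Pseudovariety) {I : Type} (S : I → TopSgr)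
    (C : TopSgr) (φ : ∀ i, (S i).carrier →ₙ* C.carrier) : Prop where
  proV : IsProV V C
  cont : ∀ i, Continuous ⇑(φ i)
  universal : ∀ (T : TopSgr), IsProV V T →
    ∀ ψ : ∀ i, (S i).carrier →ₙ* T.carrier, (∀ i, Continuous ⇑(ψ i)) →
      ∃! Ψ : C.carrier →ₙ* T.carrier, Continuous ⇑Ψ ∧ ∀ i, Ψ.comp (φ i) = ψ i

/-- `P`, together with the homomorphisms `e i`, is a free product (coproduct in the
category of semigroups) of the family `S`. -/
structure IsFreeProduct {I : Type} (S : I → Type) [∀ i, Semigroup (S i)]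
    (P : Type) [Semigroup P] (e : ∀ i, S i →ₙ* P) : Prop where
  universal : ∀ (T : Type) [Semigroup T] (f : ∀ i, S i →ₙ* T),
    ∃! F : P →ₙ* T, ∀ i, F.comp (e i) = f i

/-! ### Particular pseudovarieties and related notions -/

/-- `V` contains the pseudovariety `Sl` of finite semilattices. -/
def ContainsSl (V : Pseudovariety) : Prop :=
  ∀ (S : Type) [Semigroup S] [Finite S],
    (∀ x y : S, x * y = y * x) → (∀ x : S, x * x = x) → V.Mem S

/-- Green's `J`-preorder: `s ≤_J t`, i.e. `s ∈ S^I t S^I`. -/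
def JBelow {S : Type} [Semigroup S] (s t : S) : Prop :=
  ∃ x y : WithOne S, x * (t : WithOne S) * y = (s : WithOne S)

/-- `V` contains the pseudovariety `J` of finite `J`-trivial semigroups. -/
def ContainsJ (V : Pseudovariety) : Prop :=
  ∀ (S : Type) [Semigroup S] [Finite S],
    (∀ s t : S, JBelow s t → JBelow t s → s = t) → V.Mem S

/-- The preimage of an idempotent under a semigroup homomorphism, as a subsemigroup. -/
def fiberSub {S T : Type} [Semigroup S] [Semigroup T] (ψ : S →ₙ* T) (e : T)
    (he : e * e = e) : Subsemigroup S where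
  carrier := ⇑ψ ⁻¹' {e}
  mul_mem' := by
    intro a b ha hb
    simp only [Set.mem_preimage, Set.mem_singleton_iff] at *
    rw [map_mul, ha, hb, he]

/-- The set of products of `n+1` elements of a semigroup (so `nthProds S 0 = S`). -/
def nthProds (S : Type) [Semigroup S] : ℕ → Set S
  | 0 => Set.univ
  | n + 1 => {x | ∃ a y, y ∈ nthProds S n ∧ x = a * y}

/-- A nilpotent semigroup: it has a zero `z` and some power of the semigroup is `{z}`. -/
def IsNilpotentSgr (S : Type) [Semigroup S] : Prop :=
  ∃ z : S, (∀ x : S, z * x = z ∧ x * z = z) ∧ ∃ n : ℕ, nthProds S n ⊆ {z}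

/-- A generator of the Mal'cev product `N ⓜ V`: a finite semigroup admitting a surjective
homomorphism onto a member of `V` all of whose idempotent fibers are nilpotent. -/
def NMalcevGen (V : Pseudovariety) (S : Type) [Semigroup S] : Prop :=
  Finite S ∧ ∃ (T : SgrIn V) (ψ : S →ₙ* T.carrier), Function.Surjective ψ ∧
    ∀ (e : T.carrier) (he : e * e = e), IsNilpotentSgr (fiberSub ψ e he)

/-- The equality `N ⓜ V = V`: `V` coincides with the smallest pseudovariety containing
all finite semigroups admitting an `N`-morphism onto some member of `V`. -/
def NMalcevFixed (V : Pseudovariety) : Prop :=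
  ∀ (S : Type) [Semigroup S] [Finite S],
    V.Mem S ↔ ∀ U : Pseudovariety,
      (∀ (S' : Type) [Semigroup S'], NMalcevGen V S' → U.Mem S') → U.Mem S

/-- A completely simple semigroup: simple with a primitive idempotent. -/
def IsCompletelySimple (S : Type) [Semigroup S] : Prop :=
  (∀ J : Set S, J.Nonempty → (∀ s x : S, x ∈ J → s * x ∈ J ∧ x * s ∈ J) → J = Set.univ) ∧
  ∃ e : S, e * e = e ∧ ∀ f : S, f * f = f → e * f = f → f * e = f → f = e

/-- An equidivisible semigroup. -/
def Equidivisible (S : Type) [Semigroup S] : Prop :=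
  ∀ u v x y : S, u * v = x * y →
    ∃ t : WithOne S,
      ((x : WithOne S) = (u : WithOne S) * t ∧ t * (y : WithOne S) = (v : WithOne S)) ∨
      ((x : WithOne S) * t = (u : WithOne S) ∧ (y : WithOne S) = t * (v : WithOne S))

/-! ### The two-sided Karnofsky–Rhodes expansion -/

/-- Vertices of the two-sided Cayley graph of `T`: pairs of elements of `T^I`. -/
abbrev KRVtx (T : Type) : Type := WithOne T × WithOne T

/-- Edges of the two-sided Cayley graph: (source, label, target). -/
abbrev KREdge (A T : Type) : Type := KRVtx T × A × KRVtx T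

/-- The image in `T^I` of a letter. -/
def letterImg {A T : Type} [Semigroup T] (ψ : FreeSemigroup A →ₙ* T) (a : A) : WithOne T :=
  (ψ (FreeSemigroup.of a) : WithOne T)

/-- The image in `T^I` of a (possibly empty) word. -/
def wordImg {A T : Type} [Semigroup T] (ψ : FreeSemigroup A →ₙ* T) (w : List A) : WithOne T :=
  (w.map (letterImg ψ)).prod

/-- `e` is an edge of the two-sided Cayley graph `Γ_ψ`. -/
def IsKREdge {A T : Type} [Semigroup T] (ψ : FreeSemigroup A →ₙ* T) (e : KREdge A T) : Prop :=
  e.1.1 * letterImg ψ e.2.1 = e.2.2.1 ∧ e.1.2 = letterImg ψ e.2.1 * e.2.2.2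

/-- One step along an edge of `Γ_ψ` (used to define directed paths). -/
def KRStep {A T : Type} [Semigroup T] (ψ : FreeSemigroup A →ₙ* T) (v w : KRVtx T) : Prop :=
  ∃ a : A, v.1 * letterImg ψ a = w.1 ∧ v.2 = letterImg ψ a * w.2

/-- A transition edge of `Γ_ψ`: an edge from whose target there is no directed path
back to its source. -/
def IsTransEdge {A T : Type} [Semigroup T] (ψ : FreeSemigroup A →ₙ* T) (e : KREdge A T) : Prop :=
  IsKREdge ψ e ∧ ¬ Relation.ReflTransGen (KRStep ψ) e.2.2 e.1

/-- The list of letters of an element of the free semigroup. -/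
def letters {A : Type} (u : FreeSemigroup A) : List A := u.head :: u.tail

/-- The set of edges of the path `p_u` of `Γ_ψ` from `(I, ψ u)` to `(ψ u, I)` labeled by `u`. -/
def pathEdges {A T : Type} [Semigroup T] (ψ : FreeSemigroup A →ₙ* T) (u : FreeSemigroup A) :
    Set (KREdge A T) :=
  {e | ∃ (w₁ w₂ : List A) (a : A), letters u = w₁ ++ a :: w₂ ∧
    e = ((wordImg ψ w₁, wordImg ψ (a :: w₂)), a, (wordImg ψ (w₁ ++ [a]), wordImg ψ w₂))}

/-- The set `T(p_u)` of transition edges of `Γ_ψ` occurring in the path `p_u`. -/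
def transEdges {A T : Type} [Semigroup T] (ψ : FreeSemigroup A →ₙ* T) (u : FreeSemigroup A) :
    Set (KREdge A T) :=
  {e ∈ pathEdges ψ u | IsTransEdge ψ e}

/-- A realization of the two-sided Karnofsky–Rhodes expansion of `ψ : A⁺ → T`:
a semigroup `K = T_ψ^KR` together with the projection `ψ^KR : A⁺ → K`, which is onto and
identifies `u` and `v` exactly when `ψ u = ψ v` and `T(p_u) = T(p_v)`, and the canonical
homomorphism `π : T_ψ^KR → T` with `π ∘ ψ^KR = ψ`. -/
structure KRExp {A T : Type} [Semigroup T] (ψ : FreeSemigroup A →ₙ* T) : Type 1 where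
  K : Type
  [strK : Semigroup K]
  [finK : Finite K]
  ψKR : FreeSemigroup A →ₙ* K
  π : K →ₙ* T
  surj : Function.Surjective ⇑ψKR
  ker : ∀ u v : FreeSemigroup A, ψKR u = ψKR v ↔
    (ψ u = ψ v ∧ transEdges ψ u = transEdges ψ v)
  proj : π.comp ψKR = ψ

attribute [instance] KRExp.strK KRExp.finK

/-- The data of a two-sided Karnofsky–Rhodes expansion of a finite semigroup `T`:
a finite alphabet `A`, an onto homomorphism `ψ : A⁺ → T`, and a realization `T_ψ^KR`. -/
structure KRData (T : Type) [Semigroup T] : Type 1 where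
  A : Type
  [finA : Finite A]
  ψ : FreeSemigroup A →ₙ* T
  surjψ : Function.Surjective ⇑ψ
  E : KRExp ψ

attribute [instance] KRData.finA

/-- `V` is closed under two-sided Karnofsky–Rhodes expansion. -/
def ClosedUnderKR (V : Pseudovariety) : Prop :=
  ∀ (A T : Type) [Finite A] [Semigroup T], V.Mem T →
    ∀ (ψ : FreeSemigroup A →ₙ* T), Function.Surjective ⇑ψ →
      ∀ E : KRExp ψ, V.Mem E.K

/-! ### KR-covers -/

/-- `S` is a KR-cover of the finite semigroup `T`. -/
def IsKRCoverOf (S : TopSgr) (T : Type) [Semigroup T] [Finite T] : Prop :=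
  (∃ φ : S.carrier →ₙ* T, ContinuousDisc ⇑φ ∧ Function.Surjective ⇑φ) ∧
  ∀ φ : S.carrier →ₙ* T, ContinuousDisc ⇑φ → Function.Surjective ⇑φ →
    ∃ (D : KRData T) (φψ : S.carrier →ₙ* D.E.K),
      ContinuousDisc ⇑φψ ∧ D.E.π.comp φψ = φ

/-- `S` is a KR-cover: a KR-cover of each of its finite continuous homomorphic images. -/
def IsKRCover (S : TopSgr) : Prop :=
  ∀ (T : Type) [Semigroup T] [Finite T],
    (∃ φ : S.carrier →ₙ* T, ContinuousDisc ⇑φ ∧ Function.Surjective ⇑φ) →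
    IsKRCoverOf S T

/-- `S` is `V`-projective. -/
def IsVProjective (V : Pseudovariety) (S : TopSgr) : Prop :=
  IsProV V S ∧ ∀ (T R : TopSgr), IsProV V T → IsProV V R →
    ∀ (f : S.carrier →ₙ* T.carrier) (g : R.carrier →ₙ* T.carrier),
      Continuous ⇑f → Continuous ⇑g → Function.Surjective ⇑g →
        ∃ f' : S.carrier →ₙ* R.carrier, Continuous ⇑f' ∧ g.comp f' = f

/-! ### Strong KR-covers and letter super-cancellativity -/

/-- `κ : A → S` is a generating mapping: its image generates a dense subsemigroup. -/
def GeneratingMap {A : Type} (S : TopSgr) (κ : A → S.carrier) : Prop :=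
  Dense (Subsemigroup.closure (Set.range κ) : Set S.carrier)

/-- The homomorphism `A⁺ → T` extending `a ↦ φ (κ a)`. -/
def liftGen {A : Type} (S : TopSgr) (κ : A → S.carrier) {T : Type} [Semigroup T]
    (φ : S.carrier →ₙ* T) : FreeSemigroup A →ₙ* T :=
  FreeSemigroup.lift (fun a => φ (κ a))

/-- `S` is a strong KR-cover of the finite semigroup `T` with respect to the
generating mapping `κ`. -/
def IsStrongKRCoverOfWrt {A : Type} (S : TopSgr) (κ : A → S.carrier)
    (T : Type) [Semigroup T] [Finite T] : Prop :=
  ∀ φ : S.carrier →ₙ* T, ContinuousDisc ⇑φ → Function.Surjective ⇑φ →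
    ∃ (E : KRExp (liftGen S κ φ)) (φκ : S.carrier →ₙ* E.K),
      ContinuousDisc ⇑φκ ∧ E.π.comp φκ = φ ∧
      ∀ a : A, φκ (κ a) = E.ψKR (FreeSemigroup.of a)

/-- `S` is a strong KR-cover of the finite semigroup `T` (with respect to some
generating mapping with finite domain). -/
def IsStrongKRCoverOf (S : TopSgr) (T : Type) [Semigroup T] [Finite T] : Prop :=
  ∃ A : Type, Finite A ∧ ∃ κ : A → S.carrier, GeneratingMap S κ ∧
    IsStrongKRCoverOfWrt S κ T

/-- `S` is a strong KR-cover: a strong KR-cover of each of its finite continuous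
homomorphic images. -/
def IsStrongKRCover (S : TopSgr) : Prop :=
  ∀ (T : Type) [Semigroup T] [Finite T],
    (∃ φ : S.carrier →ₙ* T, ContinuousDisc ⇑φ ∧ Function.Surjective ⇑φ) →
    IsStrongKRCoverOf S T

/-- `S` is letter super-cancellative with respect to the subset `A` of `S`. -/
def IsLSC (S : TopSgr) (A : Set S.carrier) : Prop :=
  ∀ a ∈ A, ∀ b ∈ A, ∀ u v : WithOne S.carrier,
    (u * (a : WithOne S.carrier) = v * (b : WithOne S.carrier) → a = b ∧ u = v) ∧
    ((a : WithOne S.carrier) * u = (b : WithOne S.carrier) * v → a = b ∧ u = v)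

/-! ### `S^I` and inverse limits -/

/-- The sum topology on `S^I = S ∪ {I}`: the point `I` is isolated and `S` keeps
its topology. -/
def withOneTopology (S : Type) [TopologicalSpace S] : TopologicalSpace (WithOne S) where
  IsOpen V := IsOpen ((fun s : S => (s : WithOne S)) ⁻¹' V)
  isOpen_univ := by simp
  isOpen_inter := by
    intro U V hU hV
    rw [Set.preimage_inter]
    exact hU.inter hV
  isOpen_sUnion := by
    intro s hs
    rw [Set.preimage_sUnion]
    exact isOpen_biUnion hs

/-- `S^I` as a topological semigroup (in fact a monoid): `S` with an isolated identity
adjoined. -/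
def withOneTopSgr (S : TopSgr) : TopSgr :=
  @TopSgr.mk (WithOne S.carrier) _ (withOneTopology S.carrier)

/-- The inverse limit of a family of topological semigroups, as a subsemigroup of
the product. -/
def invLimSub {I : Type} [Preorder I] (S : I → TopSgr)
    (f : ∀ i j, j ≤ i → ((S i).carrier →ₙ* (S j).carrier)) :
    Subsemigroup (∀ i, (S i).carrier) where
  carrier := {x | ∀ i j (h : j ≤ i), f i j h (x i) = x j}
  mul_mem' := by
    intro a b ha hb i j h
    simp only [Pi.mul_apply, map_mul, ha i j h, hb i j h]

/-- The inverse limit as a topological semigroup (with the topology induced from the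
product topology). -/
def invLimTopSgr {I : Type} [Preorder I] (S : I → TopSgr)
    (f : ∀ i j, j ≤ i → ((S i).carrier →ₙ* (S j).carrier)) : TopSgr :=
  TopSgr.mk (invLimSub S f)

/-!
If `k₁ k₂ = k₃ k₄` in `T_ψ^KR`, pick words `u₁, …, u₄` with `ψ^KR`-images `k₁, …, k₄`. The
paths `p_{u₁u₂}` and `p_{u₃u₄}` have the same transition edges, so walking back along `p_{u₁u₂}`
from the cut vertex `(ψ u₁, ψ u₂)` either reaches the start vertex, which also starts `p_{u₃u₄}`,
or gets stuck at a transition edge, which also lies on `p_{u₃u₄}`. Either way the two cut vertices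
are comparable in the reachability preorder of `Γ_ψ`, and the label of a path between them is a
witness of equidivisibility in `T` for the projections of the `kᵢ`.

As `S` is a KR-cover, every open congruence `c` of `S` thus admits a witness modulo `c`. The sets
of such witnesses are closed in the compact space `S^I` and downward directed, so they share a
point `t`. Open congruences (syntactic congruences of clopen sets suffice) separate the points of
a profinite semigroup, so `t` is a witness in `S` itself.
-/

open Relation

section Overlap

variable {M : Type*}

/-- In `u * v = x * y`, the element `t` is the overlap of `x` and `v`. -/
def Overlap [Mul M] (u v x y t : M) : Prop :=
  x = u * t ∧ t * y = v

variable [Monoid M] {N P : Type*} [Monoid N] [Monoid P] {u v x y t : M}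

lemma overlap_map_iff (f : M →* N) :
    Overlap (f u) (f v) (f x) (f y) (f t) ↔ f x = f (u * t) ∧ f (t * y) = f v := by
  simp only [Overlap, map_mul]

lemma Overlap.of_map {f : M →* N} {g : M →* P} (hfg : ∀ a b, f a = f b → g a = g b)
    (h : Overlap (f u) (f v) (f x) (f y) (f t)) : Overlap (g u) (g v) (g x) (g y) (g t) := by
  rw [overlap_map_iff] at h ⊢
  exact ⟨hfg _ _ h.1, hfg _ _ h.2⟩

end Overlap

section Walks

variable {α : Type*} {r : α → α → Prop}

lemma reflTransGen_of_le_of_forall_lt {f : ℕ → α} {N i j : ℕ}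
    (hf : ∀ k < N, r (f k) (f (k + 1))) (hij : i ≤ j) (hj : j ≤ N) :
    ReflTransGen r (f i) (f j) :=
  (reflTransGen_of_succ_of_le (fun k l => r (f k) (f l))
    (fun k hk => hf k (by simp at hk; omega)) hij).lift f fun _ _ h => h

lemma reflTransGen_start_or_exists_transition (f : ℕ → α) (n : ℕ) :
    ReflTransGen r (f n) (f 0) ∨
      ∃ i < n, ¬ ReflTransGen r (f (i + 1)) (f i) ∧ ReflTransGen r (f n) (f (i + 1)) := by
  induction n with
  | zero => exact Or.inl .refl
  | succ n ih =>
    by_cases hback : ReflTransGen r (f (n + 1)) (f n)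
    · exact ih.imp hback.trans fun ⟨i, hi, hnot, hreach⟩ =>
        ⟨i, by omega, hnot, hback.trans hreach⟩
    · exact Or.inr ⟨n, n.lt_succ_self, hback, .refl⟩

theorem reflTransGen_total_of_transitions_mem {f g : ℕ → α} {N M n m : ℕ}
    (hf : ∀ i < N, r (f i) (f (i + 1))) (hg : ∀ j < M, r (g j) (g (j + 1))) (h₀ : f 0 = g 0)
    (htrans : ∀ i < n, ¬ ReflTransGen r (f (i + 1)) (f i) →
      ∃ j < M, g j = f i ∧ g (j + 1) = f (i + 1))
    (hn : n ≤ N) (hm : m ≤ M) :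
    ReflTransGen r (f n) (g m) ∨ ReflTransGen r (g m) (f n) := by
  rcases reflTransGen_start_or_exists_transition (r := r) f n with hstart | ⟨i, hi, hnot, hreach⟩
  · exact Or.inl (hstart.trans (h₀ ▸ reflTransGen_of_le_of_forall_lt hg m.zero_le hm))
  obtain ⟨j, hj, hsrc, htgt⟩ := htrans i hi hnot
  rcases lt_or_ge j m with hjm | hmj
  · exact Or.inl (hreach.trans (htgt ▸ reflTransGen_of_le_of_forall_lt hg hjm hm))
  · exact Or.inr ((hsrc ▸ reflTransGen_of_le_of_forall_lt hg hmj hj.le).trans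
      (reflTransGen_of_le_of_forall_lt hf hi.le hn))

end Walks

section KarnofskyRhodes

variable {A T : Type} [Semigroup T] (ψ : FreeSemigroup A →ₙ* T)

lemma wordImg_append (w₁ w₂ : List A) :
    wordImg ψ (w₁ ++ w₂) = wordImg ψ w₁ * wordImg ψ w₂ := by
  simp [wordImg]

lemma letters_mul (u₁ u₂ : FreeSemigroup A) : letters (u₁ * u₂) = letters u₁ ++ letters u₂ := by
  simp [letters, FreeSemigroup.head_mul, FreeSemigroup.tail_mul]

lemma wordImg_letters (u : FreeSemigroup A) : wordImg ψ (letters u) = ψ u := by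
  induction u using FreeSemigroup.recOnMul with
  | ih1 a => simp [letters, wordImg, letterImg]
  | ih2 u₁ u₂ h₁ h₂ => rw [letters_mul, wordImg_append, h₁, h₂, map_mul, WithOne.coe_mul]

/-- The `i`-th vertex of the path `p_w`. -/
def cutVtx (w : List A) (i : ℕ) : KRVtx T :=
  (wordImg ψ (w.take i), wordImg ψ (w.drop i))

lemma cutVtx_succ {w : List A} {i : ℕ} (hi : i < w.length) :
    cutVtx ψ w (i + 1) = (wordImg ψ (w.take i ++ [w[i]]), wordImg ψ (w.drop (i + 1))) := by
  rw [cutVtx, List.take_add_one, List.getElem?_eq_getElem hi, Option.toList_some]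

lemma cutVtx_snd {w : List A} {i : ℕ} (hi : i < w.length) :
    (cutVtx ψ w i).2 = wordImg ψ (w[i] :: w.drop (i + 1)) := by
  rw [cutVtx, List.drop_eq_getElem_cons hi]

lemma isKREdge_cutVtx {w : List A} {i : ℕ} (hi : i < w.length) :
    IsKREdge ψ (cutVtx ψ w i, w[i], cutVtx ψ w (i + 1)) := by
  show (cutVtx ψ w i).1 * letterImg ψ w[i] = (cutVtx ψ w (i + 1)).1 ∧
    (cutVtx ψ w i).2 = letterImg ψ w[i] * (cutVtx ψ w (i + 1)).2
  rw [cutVtx_snd ψ hi, cutVtx_succ ψ hi, wordImg_append]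
  exact ⟨by simp [cutVtx, wordImg], by simp only [wordImg, List.map_cons, List.prod_cons]⟩

lemma mem_pathEdges_iff {e : KREdge A T} {u : FreeSemigroup A} :
    e ∈ pathEdges ψ u ↔ ∃ (i : ℕ) (hi : i < (letters u).length),
      e = (cutVtx ψ (letters u) i, (letters u)[i], cutVtx ψ (letters u) (i + 1)) := by
  simp only [pathEdges, Set.mem_ofPred_eq]
  generalize letters u = w
  constructor
  · rintro ⟨w₁, w₂, a, rfl, rfl⟩
    refine ⟨w₁.length, by simp, ?_⟩
    simp [cutVtx, List.take_append, List.drop_append, List.take_of_length_le,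
      List.drop_of_length_le]
  · rintro ⟨i, hi, rfl⟩
    refine ⟨w.take i, w.drop (i + 1), w[i], ?_, ?_⟩
    · rw [← List.drop_eq_getElem_cons hi, List.take_append_drop]
    · rw [cutVtx_succ ψ hi, ← cutVtx_snd ψ hi]
      rfl

lemma cutVtx_letters_mul (u₁ u₂ : FreeSemigroup A) :
    cutVtx ψ (letters (u₁ * u₂)) (letters u₁).length =
      ((ψ u₁ : WithOne T), (ψ u₂ : WithOne T)) := by
  simp [cutVtx, letters_mul, wordImg_letters]

variable {ψ}

theorem reflTransGen_krStep_total {u₁ u₂ u₃ u₄ : FreeSemigroup A}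
    (himg : ψ (u₁ * u₂) = ψ (u₃ * u₄))
    (htrans : transEdges ψ (u₁ * u₂) = transEdges ψ (u₃ * u₄)) :
    ReflTransGen (KRStep ψ) ((ψ u₁ : WithOne T), (ψ u₂ : WithOne T)) (ψ u₃, ψ u₄) ∨
      ReflTransGen (KRStep ψ) ((ψ u₃ : WithOne T), (ψ u₄ : WithOne T)) (ψ u₁, ψ u₂) := by
  rw [← cutVtx_letters_mul, ← cutVtx_letters_mul]
  refine reflTransGen_total_of_transitions_mem (N := (letters (u₁ * u₂)).length)
    (M := (letters (u₃ * u₄)).length) (fun i hi => ⟨_, isKREdge_cutVtx ψ hi⟩)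
    (fun j hj => ⟨_, isKREdge_cutVtx ψ hj⟩) ?_ ?_ (by simp [letters_mul]) (by simp [letters_mul])
  · simp [cutVtx, wordImg_letters, himg]
  · intro i hi hnot
    have hi' : i < (letters (u₁ * u₂)).length := by simp [letters_mul]; omega
    have hmem : (cutVtx ψ _ i, _, cutVtx ψ _ (i + 1)) ∈ transEdges ψ (u₁ * u₂) :=
      ⟨(mem_pathEdges_iff ψ).2 ⟨i, hi', rfl⟩, isKREdge_cutVtx ψ hi', hnot⟩
    rw [htrans] at hmem
    obtain ⟨j, hj, he⟩ := (mem_pathEdges_iff ψ).1 hmem.1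
    simp only [Prod.mk.injEq] at he
    exact ⟨j, hj, he.1.symm, he.2.2.symm⟩

lemma exists_overlap_of_reflTransGen {p q : KRVtx T} (h : ReflTransGen (KRStep ψ) p q) :
    ∃ t, Overlap p.1 p.2 q.1 q.2 t := by
  induction h with
  | refl => exact ⟨1, (mul_one _).symm, one_mul _⟩
  | tail _ hstep ih =>
    obtain ⟨t, ht₁, ht₂⟩ := ih
    obtain ⟨a, ha₁, ha₂⟩ := hstep
    exact ⟨t * letterImg ψ a, by rw [← mul_assoc, ← ht₁, ha₁], by rw [mul_assoc, ← ha₂, ht₂]⟩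

theorem KRExp.exists_overlap (E : KRExp ψ) {k₁ k₂ k₃ k₄ : E.K} (h : k₁ * k₂ = k₃ * k₄) :
    ∃ t : WithOne T, Overlap (E.π k₁ : WithOne T) (E.π k₂) (E.π k₃) (E.π k₄) t ∨
      Overlap (E.π k₃ : WithOne T) (E.π k₄) (E.π k₁) (E.π k₂) t := by
  obtain ⟨u₁, rfl⟩ := E.surj k₁
  obtain ⟨u₂, rfl⟩ := E.surj k₂
  obtain ⟨u₃, rfl⟩ := E.surj k₃
  obtain ⟨u₄, rfl⟩ := E.surj k₄
  have hπ (u : FreeSemigroup A) : E.π (E.ψKR u) = ψ u := DFunLike.congr_fun E.proj u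
  obtain ⟨himg, htrans⟩ := (E.ker (u₁ * u₂) (u₃ * u₄)).1 (by rw [map_mul, map_mul, h])
  simp only [hπ]
  exact (reflTransGen_krStep_total himg htrans).elim
    (fun h => (exists_overlap_of_reflTransGen h).imp fun _ => Or.inl)
    (fun h => (exists_overlap_of_reflTransGen h).imp fun _ => Or.inr)

theorem IsKRCoverOf.exists_overlap {S : TopSgr} [Finite T] (hS : IsKRCoverOf S T)
    {φ : S.carrier →ₙ* T} (hφ : ContinuousDisc φ) (hφs : Function.Surjective φ)
    {u v x y : S.carrier} (h : u * v = x * y) :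
    ∃ t : WithOne T, Overlap (φ u : WithOne T) (φ v) (φ x) (φ y) t ∨
      Overlap (φ x : WithOne T) (φ y) (φ u) (φ v) t := by
  obtain ⟨D, χ, -, hχ⟩ := hS.2 φ hφ hφs
  have hπ (s : S.carrier) : D.E.π (χ s) = φ s := DFunLike.congr_fun hχ s
  simpa only [hπ] using D.E.exists_overlap (k₁ := χ u) (k₂ := χ v) (k₃ := χ x) (k₄ := χ y)
    (by rw [← map_mul, ← map_mul, h])

end KarnofskyRhodes

section OpenCongruence

open Filter Topology

lemma IsClopen.eventually_mem_iff {X : Type*} [TopologicalSpace X] {U : Set X} (hU : IsClopen U)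
    (x : X) : ∀ᶠ y in 𝓝 x, y ∈ U ↔ x ∈ U := by
  by_cases hx : x ∈ U
  · exact (hU.isOpen.eventually_mem hx).mono fun y hy => iff_of_true hy hx
  · exact (hU.compl.isOpen.eventually_mem hx).mono fun y hy => iff_of_false hy hx

lemma isOpen_setOf_forall_mem_iff {Y Z W : Type*} [TopologicalSpace Y] [TopologicalSpace Z]
    [TopologicalSpace W] [CompactSpace Z] {F : Y × Z → W} (hF : Continuous F) {U : Set W}
    (hU : IsClopen U) (y₀ : Y) : IsOpen {y | ∀ z, F (y₀, z) ∈ U ↔ F (y, z) ∈ U} := by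
  refine isOpen_iff_eventually.2 fun y₁ hy₁ => ?_
  have hnear : ∀ᶠ y in 𝓝 y₁, ∀ z ∈ Set.univ, F (y, z) ∈ U ↔ F (y₁, z) ∈ U := by
    refine isCompact_univ.eventually_forall_of_forall_eventually fun z _ => ?_
    have hslice : Continuous fun p : Y × Z => F (y₁, p.2) := hF.comp (by fun_prop)
    filter_upwards [(hU.preimage hF).eventually_mem_iff (y₁, z),
      (hU.preimage hslice).eventually_mem_iff (y₁, z)] with p h₁ h₂
    exact h₁.trans h₂.symm
  exact hnear.mono fun y hy z => (hy₁ z).trans (hy z trivial).symm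

lemma Con.mkMulHom_surjective {X : Type*} [Mul X] (c : Con X) : Function.Surjective c.mkMulHom :=
  Quotient.mk''_surjective

variable {X : Type} [TopologicalSpace X]

def IsOpenCon [Mul X] (c : Con X) : Prop :=
  ∀ s, IsOpen {s' | c s s'}

section Mul

variable [Mul X] {c d : Con X}

lemma isOpenCon_top : IsOpenCon (⊤ : Con X) := fun s => by
  rw [show {s' | (⊤ : Con X) s s'} = Set.univ from Set.eq_univ_of_forall fun _ => trivial]
  exact isOpen_univ

lemma IsOpenCon.inf (hc : IsOpenCon c) (hd : IsOpenCon d) : IsOpenCon (c ⊓ d) :=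
  fun s => (hc s).inter (hd s)

lemma IsOpenCon.isOpen_preimage (hc : IsOpenCon c) (V : Set c.Quotient) :
    IsOpen (((↑) : X → c.Quotient) ⁻¹' V) := by
  refine isOpen_iff_forall_mem_open.2 fun s hs => ⟨_, fun s' hs' => ?_, hc s, c.refl s⟩
  rwa [Set.mem_preimage, ← c.eq.2 hs']

lemma IsOpenCon.continuousDisc_mkMulHom (hc : IsOpenCon c) : ContinuousDisc c.mkMulHom :=
  @continuous_def _ _ _ ⊥ _ |>.2 fun V _ => hc.isOpen_preimage V

lemma IsOpenCon.finite_quotient [CompactSpace X] (hc : IsOpenCon c) : Finite c.Quotient := by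
  let _ : TopologicalSpace c.Quotient := ⊥
  have : DiscreteTopology c.Quotient := ⟨rfl⟩
  have := c.mkMulHom_surjective.compactSpace hc.continuousDisc_mkMulHom
  exact finite_of_compact_of_discrete

end Mul

variable [Semigroup X]

def synCon (U : Set X) : Con X where
  toSetoid := Setoid.ker fun a (p : WithOne X × WithOne X) =>
    p.1 * a * p.2 ∈ ((↑) '' U : Set (WithOne X))
  mul' {a b a' b'} h h' := by
    funext p
    have h₁ := congrFun h (p.1, a' * p.2)
    have h₂ := congrFun h' (p.1 * b, p.2)
    simp only [WithOne.coe_mul, mul_assoc] at h₁ h₂ ⊢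
    exact h₁.trans h₂

lemma isOpenCon_synCon [CompactSpace X] [ContinuousMul X] {U : Set X} (hU : IsClopen U) :
    IsOpenCon (synCon U) := by
  intro s
  have hclass : {s' | synCon U s s'} =
      ({s' | ∀ _ : Unit, s ∈ U ↔ s' ∈ U} ∩ {s' | ∀ z, z * s ∈ U ↔ z * s' ∈ U}) ∩
        ({s' | ∀ w, s * w ∈ U ↔ s' * w ∈ U} ∩
          {s' | ∀ p : X × X, p.1 * s * p.2 ∈ U ↔ p.1 * s' * p.2 ∈ U}) := by
    ext s'
    simp [synCon, Setoid.ker, Function.onFun, funext_iff, WithOne.forall, forall_and,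
      ← WithOne.coe_mul]
  rw [hclass]
  exact ((isOpen_setOf_forall_mem_iff (F := fun p : X × Unit => p.1) (by fun_prop) hU s).inter
    (isOpen_setOf_forall_mem_iff (F := fun p : X × X => p.2 * p.1) (by fun_prop) hU s)).inter
    ((isOpen_setOf_forall_mem_iff (F := fun p : X × X => p.1 * p.2) (by fun_prop) hU s).inter
    (isOpen_setOf_forall_mem_iff (F := fun p : X × (X × X) => p.2.1 * p.1 * p.2.2)
      (by fun_prop) hU s))

lemma exists_isOpenCon_not_rel [CompactSpace X] [T2Space X] [TotallyDisconnectedSpace X]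
    [ContinuousMul X] {a b : X} (hab : a ≠ b) : ∃ c : Con X, IsOpenCon c ∧ ¬ c a b := by
  obtain ⟨U, hU, haU, hbU⟩ := exists_isClopen_of_totally_separated hab
  refine ⟨synCon U, isOpenCon_synCon hU, fun h => hbU ?_⟩
  simpa [haU] using congrFun h (1, 1)

end OpenCongruence

section WithOne

variable {X : Type*} [Mul X] {c d : Con X}

def Con.mkWithOne (c : Con X) : WithOne X →* WithOne c.Quotient :=
  WithOne.mapMulHom c.mkMulHom

lemma Con.mkWithOne_surjective (c : Con X) : Function.Surjective c.mkWithOne := by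
  intro s
  induction s using WithOne.recOneCoe with
  | one => exact ⟨1, rfl⟩
  | coe q =>
    obtain ⟨a, rfl⟩ := c.mkMulHom_surjective q
    exact ⟨a, rfl⟩

lemma Con.mkWithOne_eq_of_le (h : c ≤ d) {a b : WithOne X}
    (hab : c.mkWithOne a = c.mkWithOne b) : d.mkWithOne a = d.mkWithOne b := by
  induction a using WithOne.recOneCoe <;> induction b using WithOne.recOneCoe <;>
    simp_all [Con.mkWithOne, Con.eq, Con.le_def]

end WithOne

section WithOneTopology

attribute [local instance] withOneTopology

variable {X : Type} [TopologicalSpace X]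

lemma compactSpace_withOne [CompactSpace X] : CompactSpace (WithOne X) := by
  have hcoe : Continuous ((↑) : X → WithOne X) := ⟨fun _ hV => hV⟩
  have huniv : insert 1 (Set.range ((↑) : X → WithOne X)) = Set.univ :=
    Set.eq_univ_of_forall fun t => by induction t using WithOne.recOneCoe <;> simp
  exact ⟨huniv ▸ (isCompact_range hcoe).insert 1⟩

lemma IsOpenCon.isClosed_preimage_mkWithOne [Mul X] {c : Con X} (hc : IsOpenCon c)
    (V : Set (WithOne c.Quotient)) : IsClosed (c.mkWithOne ⁻¹' V) := by
  rw [← isOpen_compl_iff, ← Set.preimage_compl]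
  exact hc.isOpen_preimage ((↑) ⁻¹' Vᶜ)

end WithOneTopology

lemma forall_or_forall_of_codirected {ι : Type*} [Preorder ι] {p q : ι → Prop}
    (hd : ∀ i j : ι, ∃ k, k ≤ i ∧ k ≤ j) (hp : Monotone p) (hq : Monotone q)
    (h : ∀ i, p i ∨ q i) : (∀ i, p i) ∨ ∀ i, q i := by
  by_contra! hpq
  obtain ⟨⟨i, hi⟩, ⟨j, hj⟩⟩ := hpq
  obtain ⟨k, hki, hkj⟩ := hd i j
  exact (h k).elim (fun hk => hi (hp hki hk)) fun hk => hj (hq hkj hk)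

section Profinite

variable {X : Type} [TopologicalSpace X] [Semigroup X] [CompactSpace X] [T2Space X]
  [TotallyDisconnectedSpace X] [ContinuousMul X]

lemma eq_of_forall_isOpenCon {a b : WithOne X}
    (h : ∀ c : Con X, IsOpenCon c → c.mkWithOne a = c.mkWithOne b) : a = b := by
  have htop := h ⊤ isOpenCon_top
  induction a using WithOne.recOneCoe <;> induction b using WithOne.recOneCoe
  · rfl
  · exact absurd htop WithOne.one_ne_coe
  · exact absurd htop WithOne.coe_ne_one
  case coe.coe a b =>
    by_contra hne
    obtain ⟨c, hc, hab⟩ := exists_isOpenCon_not_rel fun hab => hne (congrArg _ hab)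
    exact hab (c.eq.1 (WithOne.coe_inj.1 (h c hc)))

lemma Overlap.of_forall_isOpenCon {u v x y t : WithOne X}
    (h : ∀ c : Con X, IsOpenCon c → Overlap (c.mkWithOne u) (c.mkWithOne v) (c.mkWithOne x)
      (c.mkWithOne y) (c.mkWithOne t)) :
    Overlap u v x y t := by
  simp only [overlap_map_iff] at h
  exact ⟨eq_of_forall_isOpenCon fun c hc => (h c hc).1,
    eq_of_forall_isOpenCon fun c hc => (h c hc).2⟩

theorem exists_overlap_of_forall_isOpenCon {u v x y : WithOne X}
    (h : ∀ c : Con X, IsOpenCon c → ∃ t,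
      Overlap (c.mkWithOne u) (c.mkWithOne v) (c.mkWithOne x) (c.mkWithOne y) t ∨
        Overlap (c.mkWithOne x) (c.mkWithOne y) (c.mkWithOne u) (c.mkWithOne v) t) :
    ∃ t, Overlap u v x y t ∨ Overlap x y u v t := by
  let _ := withOneTopology X
  let ι := {c : Con X // IsOpenCon c}
  let W (c : ι) : Set (WithOne X) := c.1.mkWithOne ⁻¹' {s |
    Overlap (c.1.mkWithOne u) (c.1.mkWithOne v) (c.1.mkWithOne x) (c.1.mkWithOne y) s ∨
      Overlap (c.1.mkWithOne x) (c.1.mkWithOne y) (c.1.mkWithOne u) (c.1.mkWithOne v) s}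
  have hcodir (c d : ι) : ∃ e : ι, e ≤ c ∧ e ≤ d :=
    ⟨⟨_, c.2.inf d.2⟩, (inf_le_left : c.1 ⊓ d.1 ≤ c.1), (inf_le_right : c.1 ⊓ d.1 ≤ d.1)⟩
  have hmono {u' v' x' y' t : WithOne X} : Monotone fun c : ι => Overlap (c.1.mkWithOne u')
      (c.1.mkWithOne v') (c.1.mkWithOne x') (c.1.mkWithOne y') (c.1.mkWithOne t) :=
    fun _ _ hcd => Overlap.of_map fun _ _ => Con.mkWithOne_eq_of_le hcd
  have : Nonempty ι := ⟨⟨⊤, isOpenCon_top⟩⟩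
  have := compactSpace_withOne (X := X)
  obtain ⟨t, ht⟩ := IsCompact.nonempty_iInter_of_directed_nonempty_isCompact_isClosed W
    (fun c d => (hcodir c d).imp fun e he =>
      ⟨fun t ht => ht.imp (hmono he.1) (hmono he.1), fun t ht => ht.imp (hmono he.2) (hmono he.2)⟩)
    (fun c => by
      obtain ⟨s, hs⟩ := h c.1 c.2
      obtain ⟨t, rfl⟩ := c.1.mkWithOne_surjective s
      exact ⟨t, hs⟩)
    (fun c => (c.2.isClosed_preimage_mkWithOne _).isCompact)
    (fun c => c.2.isClosed_preimage_mkWithOne _)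
  rcases forall_or_forall_of_codirected hcodir hmono hmono (Set.mem_iInter.1 ht) with hl | hr
  · exact ⟨t, Or.inl (Overlap.of_forall_isOpenCon fun c hc => hl ⟨c, hc⟩)⟩
  · exact ⟨t, Or.inr (Overlap.of_forall_isOpenCon fun c hc => hr ⟨c, hc⟩)⟩

end Profinite

/-- Profinite KR-covers are equidivisible. -/
theorem KRCover_equidivisible (S : TopSgr) (hpro : IsProfiniteSgr S)
    (hKR : IsKRCover S) :
    Equidivisible S.carrier := by
  obtain ⟨_, _, _, _⟩ := hpro
  intro u v x y huv
  obtain ⟨t, ht⟩ := exists_overlap_of_forall_isOpenCon (u := (u : WithOne S.carrier)) (v := v)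
    (x := x) (y := y) fun c hc => by
      have := hc.finite_quotient
      have hmk := hc.continuousDisc_mkMulHom
      exact (hKR _ ⟨_, hmk, c.mkMulHom_surjective⟩).exists_overlap hmk c.mkMulHom_surjective huv
  exact ⟨t, ht.imp id fun h => ⟨h.1.symm, h.2.symm⟩⟩
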